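/- arXiv:1108.4346 — 4 statements merged into one kernel-verified Lean document; each statement's English description precedes it below -/
import Mathlib

section
/- Let (X_n, ∂_i) be a simplicial set satisfying the simplicial identity ∂_i ∂_j = ∂_j ∂_{i+1} for all j ≤ i, and let ∂ = Σ_{i=0}^{n} q^i ∂_i on the free ℤ[q]-module generated in degree n. Then for 0 ≤ k ≤ N, the iterated border map satisfies ∂^k = [k]_q! · Σ_{i_1 ≤ ... ≤ i_k} q^{i_1 + ... + i_k} ∂_{i_k} ··· ∂_{i_1}. -/
noncomputable section

attribute [local instance] Classical.propDecidable

/-- The q-integer `[k]_q = 1 + q + ... + q^(k-1)`. -/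
def qInt (q : ℂ) (k : ℕ) : ℂ := ∑ i ∈ Finset.range k, q ^ i

/-- The q-factorial `[k]_q! = [1]_q [2]_q ⋯ [k]_q`. -/
def qFac (q : ℂ) (k : ℕ) : ℂ := ∏ i ∈ Finset.range k, qInt q (i + 1)

/-- The module of chains (over `ℂ ⊇ ℤ[q]`) on a simplicial set `S`. -/
abbrev ChainsS (S : ℕ → Type) : Type := (Σ n : ℕ, S n) →₀ ℂ

/-- The q-analog border map `∂ = ∑_{i=0}^{n} qⁱ ∂ᵢ` on the chains of a simplicial set. -/
def qBorderS (q : ℂ) (S : ℕ → Type) (d : ∀ n : ℕ, Fin (n + 2) → S (n + 1) → S n) :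
    ChainsS S →ₗ[ℂ] ChainsS S :=
  Finsupp.lsum ℂ fun s =>
    match s with
    | ⟨0, _⟩ => 0
    | ⟨n + 1, x⟩ => ∑ i : Fin (n + 2),
        q ^ (i : ℕ) • Finsupp.lsingle (⟨n, d n i x⟩ : Σ n : ℕ, S n)

/-- A single face map with the index given as a natural number (junk value out of range). -/
def dNat (S : ℕ → Type) (d : ∀ n : ℕ, Fin (n + 2) → S (n + 1) → S n) (n : ℕ) (i : ℕ) :
    S (n + 1) → S n :=
  if h : i < n + 2 then d n ⟨i, h⟩ else d n 0

/-- The iterated face map `∂_{f 0} ∂_{f 1} ⋯ ∂_{f (k-1)} : S (m+k) → S m`,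
where `∂_{f (k-1)}` is applied first. -/
def dIter (S : ℕ → Type) (d : ∀ n : ℕ, Fin (n + 2) → S (n + 1) → S n) (m : ℕ) :
    ∀ k : ℕ, (ℕ → ℕ) → S (m + k) → S m
  | 0, _, x => x
  | k + 1, f, x => dIter S d m k f (dNat S d (m + k) (f k) x)

/-
Induct on `k`, writing `∂^(k+1) x = ∂^k (∂ x)`: by the induction hypothesis this is `[k]_q!` times
the sum over pairs `(j, f)`, `f` an ordered `k`-tuple of indices, of `q^(j + Σ f) ∂_f ∂_j x`. By the
simplicial identities the face `∂_j` moves through the last `k - r` faces of `∂_f`, its index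
dropping by one at each step, until it settles at the position `r` where the indices stay
ordered; this yields an ordered `(k+1)`-tuple `g` with `Σ g = j + Σ f - (k - r)`. Every pair
`(g, r)` arises from exactly one pair `(j, f)` (delete the `r`-th entry of `g`), so summing
`q^(k - r)` over `r` contributes the factor `[k+1]_q`.
-/

open Finset

def SimplicialIdentity {S : ℕ → Type} (d : ∀ n : ℕ, Fin (n + 2) → S (n + 1) → S n) : Prop :=
  ∀ (n : ℕ) (i j : Fin (n + 2)), (j : ℕ) ≤ (i : ℕ) →
    ∀ x : S (n + 2), d n i (d (n + 1) j.castSucc x) = d n j (d (n + 1) i.succ x)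

section Faces

variable {S : ℕ → Type} {d : ∀ n : ℕ, Fin (n + 2) → S (n + 1) → S n}

lemma dNat_of_lt {n i : ℕ} (h : i < n + 2) (x : S (n + 1)) : dNat S d n i x = d n ⟨i, h⟩ x := by
  simp only [dNat, dif_pos h]

lemma dNat_dNat_of_lt (hd : SimplicialIdentity d) {n a b : ℕ} (hab : a < b) (hb : b ≤ n + 2)
    (x : S (n + 2)) :
    dNat S d n a (dNat S d (n + 1) b x) = dNat S d n (b - 1) (dNat S d (n + 1) a x) := by
  rw [dNat_of_lt (by omega), dNat_of_lt (by omega), dNat_of_lt (by omega), dNat_of_lt (by omega)]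
  have key := hd n ⟨b - 1, by omega⟩ ⟨a, by omega⟩ (by simp only; omega) x
  have hsucc : (Fin.succ ⟨b - 1, by omega⟩ : Fin (n + 3)) = ⟨b, by omega⟩ :=
    Fin.ext (by simp only [Fin.val_succ]; omega)
  rw [hsucc] at key
  exact key.symm

lemma dIter_congr {m : ℕ} : ∀ {k : ℕ} {f f' : ℕ → ℕ}, (∀ u < k, f u = f' u) →
    ∀ x : S (m + k), dIter S d m k f x = dIter S d m k f' x
  | 0, _, _, _, _ => rfl
  | k + 1, f, f', h, x => by
    simp only [dIter, h k (by omega)]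
    exact dIter_congr (fun u hu => h u (by omega)) _

/-- The face `∂_{g r + (k - r)}` is moved past the `k - r` faces `∂_{g k}, …, ∂_{g (r+1)}`
applied after it, its index dropping by one at each step, until it becomes `∂_{g r}`. -/
lemma dIter_dNat_eq_dIter_succ (hd : SimplicialIdentity d) {m : ℕ} (g : ℕ → ℕ) {r : ℕ}
    (hgr : g r ≤ m + 1) :
    ∀ {k : ℕ}, r ≤ k → (∀ t, r ≤ t → t ≤ k → g t ≤ g r) → ∀ x : S (m + k + 1),
      dIter S d m k (fun t => if t < r then g t else g (t + 1)) (dNat S d (m + k) (g r + (k - r)) x)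
        = dIter S d m (k + 1) g x
  | 0, hr, _, x => by
    obtain rfl : r = 0 := by omega
    rfl
  | k + 1, hr, hg, x => by
    rcases hr.eq_or_lt with rfl | hrk
    · simp only [Nat.sub_self, add_zero]
      exact dIter_congr (fun u hu => if_pos hu) _
    · have hswap := dNat_dNat_of_lt hd (n := m + k) (a := g (k + 1)) (b := g r + (k + 1 - r))
        (by have := hg (k + 1) (by omega) le_rfl; omega) (by omega) x
      rw [show g r + (k + 1 - r) - 1 = g r + (k - r) by omega] at hswap
      change dIter S d m k _ (dNat S d (m + k) (if k < r then g k else g (k + 1)) _) = _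
      rw [if_neg (by omega)]
      refine (congrArg (dIter S d m k _) hswap).trans ?_
      exact dIter_dNat_eq_dIter_succ hd g hgr (by omega) (fun t h₁ h₂ => hg t h₁ (by omega)) _

def faceSeq {k m : ℕ} (f : Fin k → Fin (m + 2)) : ℕ → ℕ :=
  fun t => if h : t < k then (f ⟨t, h⟩ : ℕ) else 0

lemma faceSeq_of_lt {k m : ℕ} (f : Fin k → Fin (m + 2)) {t : ℕ} (h : t < k) :
    faceSeq f t = f ⟨t, h⟩ :=
  dif_pos h

lemma faceSeq_removeNth {k m : ℕ} (g : Fin (k + 1) → Fin (m + 2)) (r : Fin (k + 1)) {u : ℕ}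
    (hu : u < k) :
    faceSeq (Fin.removeNth r g) u = if u < r then faceSeq g u else faceSeq g (u + 1) := by
  rw [faceSeq_of_lt _ hu, Fin.removeNth_apply]
  split_ifs with h
  · rw [Fin.succAbove_of_castSucc_lt _ _ h, faceSeq_of_lt _ (by omega)]
    rfl
  · rw [Fin.succAbove_of_le_castSucc _ _ (by simp only [Fin.le_def, Fin.val_castSucc]; omega),
      faceSeq_of_lt _ (by omega)]
    rfl

lemma dIter_removeNth (hd : SimplicialIdentity d) {m k : ℕ} {g : Fin (k + 1) → Fin (m + 2)}
    (hg : Antitone g) (r : Fin (k + 1)) (x : S (m + k + 1)) :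
    dIter S d m k (faceSeq (Fin.removeNth r g)) (dNat S d (m + k) (g r + (k - r)) x)
      = dIter S d m (k + 1) (faceSeq g) x := by
  have hgr : faceSeq g r = g r := faceSeq_of_lt g r.isLt
  rw [dIter_congr (fun u hu => faceSeq_removeNth g r hu), ← hgr]
  refine dIter_dNat_eq_dIter_succ hd _ ?_ (Nat.lt_succ_iff.mp r.isLt) (fun t h₁ h₂ => ?_) x
  · rw [hgr]
    exact Nat.lt_succ_iff.mp (g r).isLt
  · rw [hgr, faceSeq_of_lt g (by omega)]
    exact hg (Fin.le_def.mpr h₁)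

end Faces

lemma Fin.lt_card_filter_iff {k : ℕ} {P : Fin k → Prop} [DecidablePred P]
    (hP : ∀ a b, a ≤ b → P b → P a) (t : Fin k) : (t : ℕ) < #{s | P s} ↔ P t := by
  constructor
  · intro ht
    by_contra hPt
    have hsub : ({s | P s} : Finset (Fin k)) ⊆ Iio t := fun s hs =>
      mem_Iio.mpr (lt_of_not_ge fun hts => hPt (hP _ _ hts (mem_filter.mp hs).2))
    have := card_le_card hsub
    rw [Fin.card_Iio] at this
    omega
  · intro hPt
    have hsub : Iic t ⊆ ({s | P s} : Finset (Fin k)) := fun s hs =>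
      mem_filter.mpr ⟨mem_univ _, hP _ _ (mem_Iic.mp hs) hPt⟩
    have := card_le_card hsub
    rw [Fin.card_Iic] at this
    omega

lemma Fin.antitone_insertNth {α : Type*} [Preorder α] {n : ℕ} {f : Fin n → α} (hf : Antitone f)
    (p : Fin (n + 1)) (x : α) (h₁ : ∀ i, i.castSucc < p → x ≤ f i)
    (h₂ : ∀ i, p ≤ i.castSucc → f i ≤ x) :
    Antitone (Fin.insertNth (α := fun _ ↦ α) p x f) := by
  intro a b hab
  cases a using Fin.succAboveCases p <;> cases b using Fin.succAboveCases p <;>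
    simp only [Fin.insertNth_apply_same, Fin.insertNth_apply_succAbove]
  · exact le_rfl
  · exact h₂ _
      ((Fin.lt_succAbove_iff_le_castSucc _ _).mp (hab.lt_of_ne (Fin.succAbove_ne _ _).symm))
  · exact h₁ _ ((Fin.succAbove_lt_iff_castSucc_lt _ _).mp (hab.lt_of_ne (Fin.succAbove_ne _ _)))
  · exact hf (Fin.succAbove_le_succAbove_iff.mp hab)

section Tuples

variable {k m : ℕ}

def antitoneTuples (k m : ℕ) : Finset (Fin k → Fin (m + 2)) :=
  univ.filter fun f => ∀ t s : Fin k, t ≤ s → f s ≤ f t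

lemma mem_antitoneTuples {f : Fin k → Fin (m + 2)} : f ∈ antitoneTuples k m ↔ Antitone f := by
  simp only [antitoneTuples, mem_filter, mem_univ, true_and]
  rfl

/-- Where the face `∂ⱼ` ends up when it is moved through the ordered composite `∂_f`. -/
def insertPos (f : Fin k → Fin (m + 2)) (j : ℕ) : Fin (k + 1) :=
  ⟨#{t | j ≤ (f t : ℕ) + (k - 1 - t)},
    Nat.lt_succ_of_le ((card_filter_le _ _).trans (card_fin k).le)⟩

variable {f : Fin k → Fin (m + 2)} {j : ℕ}

lemma lt_insertPos_iff (hf : Antitone f) (t : Fin k) :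
    (t : ℕ) < insertPos f j ↔ j ≤ (f t : ℕ) + (k - 1 - t) :=
  Fin.lt_card_filter_iff (fun a b hab h => h.trans (add_le_add (hf hab) (by omega))) t

lemma le_of_lt_insertPos (hf : Antitone f) {t : Fin k} (ht : (t : ℕ) < insertPos f j) :
    j ≤ (f t : ℕ) + (k - insertPos f j) := by
  have hlast :=
    (lt_insertPos_iff (j := j) hf ⟨insertPos f j - 1, by omega⟩).mp (by simp only; omega)
  have hmono : (f ⟨insertPos f j - 1, by omega⟩ : ℕ) ≤ f t :=
    hf (Fin.le_def.mpr (by simp only; omega))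
  simp only at hlast
  omega

lemma add_le_of_insertPos_le (hf : Antitone f) {t : Fin k} (ht : (insertPos f j : ℕ) ≤ t) :
    (f t : ℕ) + (k - insertPos f j) ≤ j := by
  have hfirst :=
    (lt_insertPos_iff (j := j) hf ⟨insertPos f j, by omega⟩).not.mp (by simp only; omega)
  have hmono : (f t : ℕ) ≤ f ⟨insertPos f j, by omega⟩ :=
    hf (Fin.le_def.mpr (by simp only; omega))
  simp only at hfirst
  omega

lemma sub_insertPos_le (hf : Antitone f) : k - insertPos f j ≤ j := by
  rcases lt_or_ge (insertPos f j : ℕ) k with h | h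
  · have := add_le_of_insertPos_le (j := j) hf (t := ⟨insertPos f j, h⟩) le_rfl
    omega
  · omega

lemma sub_sub_insertPos_le (hf : Antitone f) (hj : j ≤ m + k + 1) :
    j - (k - insertPos f j) ≤ m + 1 := by
  rcases Nat.eq_zero_or_pos (insertPos f j : ℕ) with h | h
  · omega
  · have := le_of_lt_insertPos (j := j) hf (t := ⟨insertPos f j - 1, by omega⟩)
      (by simp only; omega)
    have := (f ⟨insertPos f j - 1, by omega⟩).isLt
    omega

-- `Fin.clamp` is only a guard: for antitone `f` and `j ≤ m + k + 1` the value is `≤ m + 1`.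
def insertFace (f : Fin k → Fin (m + 2)) (j : ℕ) : Fin (k + 1) → Fin (m + 2) :=
  Fin.insertNth (insertPos f j) (Fin.clamp (j - (k - insertPos f j)) (m + 1)) f

lemma antitone_insertFace (hf : Antitone f) (hj : j ≤ m + k + 1) : Antitone (insertFace f j) := by
  have hval : (Fin.clamp (j - (k - insertPos f j)) (m + 1) : ℕ) = j - (k - insertPos f j) :=
    min_eq_left (sub_sub_insertPos_le hf hj)
  refine Fin.antitone_insertNth hf _ _ (fun t ht => ?_) (fun t ht => ?_)
  · have := le_of_lt_insertPos hf (j := j) ht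
    rw [Fin.le_def, hval]
    omega
  · have := add_le_of_insertPos_le hf (j := j) ht
    rw [Fin.le_def, hval]
    omega

lemma insertFace_insertPos (hf : Antitone f) (hj : j ≤ m + k + 1) :
    (insertFace f j (insertPos f j) : ℕ) + (k - insertPos f j) = j := by
  rw [insertFace, Fin.insertNth_apply_same]
  have := sub_insertPos_le (j := j) hf
  have := sub_sub_insertPos_le hf hj
  show min _ _ + _ = _
  omega

lemma insertPos_removeNth {g : Fin (k + 1) → Fin (m + 2)} (hg : Antitone g) (r : Fin (k + 1)) :
    insertPos (Fin.removeNth r g) (g r + (k - r)) = r := by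
  refine Fin.ext ?_
  unfold insertPos
  dsimp only
  rw [filter_congr (q := fun t : Fin k => (t : ℕ) < r) fun t _ => ?_, Fin.card_filter_val_lt]
  · omega
  rw [Fin.removeNth_apply]
  by_cases ht : (t : ℕ) < r
  · rw [Fin.succAbove_of_castSucc_lt _ _ ht]
    have : g r ≤ g t.castSucc := hg (Fin.le_def.mpr (by simp only [Fin.val_castSucc]; omega))
    simp only [ht, iff_true]
    omega
  · rw [Fin.succAbove_of_le_castSucc _ _ (Fin.le_def.mpr (by simp only [Fin.val_castSucc]; omega))]
    have : g t.succ ≤ g r := hg (Fin.le_def.mpr (by simp only [Fin.val_succ]; omega))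
    simp only [ht, iff_false]
    omega

lemma insertFace_removeNth {g : Fin (k + 1) → Fin (m + 2)} (hg : Antitone g) (r : Fin (k + 1)) :
    insertFace (Fin.removeNth r g) (g r + (k - r)) = g := by
  rw [insertFace, insertPos_removeNth hg, Nat.add_sub_cancel]
  convert Fin.insertNth_self_removeNth r g
  exact Fin.ext (min_eq_left (Nat.lt_succ_iff.mp (g r).isLt))

lemma sum_antitoneTuples_removeNth {M : Type*} [AddCommMonoid M]
    (F : Fin (m + k + 2) → (Fin k → Fin (m + 2)) → M) :
    ∑ g ∈ antitoneTuples (k + 1) m, ∑ r : Fin (k + 1),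
        F ⟨g r + (k - r), by omega⟩ (Fin.removeNth r g)
      = ∑ j, ∑ f ∈ antitoneTuples k m, F j f := by
  rw [← sum_product' (f := fun (g : Fin (k + 1) → Fin (m + 2)) (r : Fin (k + 1)) =>
    F ⟨g r + (k - r), by omega⟩ (Fin.removeNth r g)), ← sum_product']
  refine sum_nbij' (fun p => (⟨p.1 p.2 + (k - p.2), by omega⟩, Fin.removeNth p.2 p.1))
    (fun p => (insertFace p.2 p.1, insertPos p.2 p.1)) ?_ ?_ ?_ ?_ (fun _ _ => rfl)
  · rintro ⟨g, r⟩ hp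
    simp only [mem_product, mem_antitoneTuples, mem_univ, true_and, and_true] at hp ⊢
    exact hp.comp_monotone (Fin.strictMono_succAbove r).monotone
  · rintro ⟨j, f⟩ hp
    simp only [mem_product, mem_antitoneTuples, mem_univ, true_and, and_true] at hp ⊢
    exact antitone_insertFace hp (by omega)
  · rintro ⟨g, r⟩ hp
    simp only [mem_product, mem_antitoneTuples, mem_univ, and_true] at hp
    simp only [insertFace_removeNth hp, insertPos_removeNth hp]
  · rintro ⟨j, f⟩ hp
    simp only [mem_product, mem_antitoneTuples, mem_univ, true_and] at hp
    simp only [Prod.mk.injEq]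
    refine ⟨Fin.ext (insertFace_insertPos hp (by omega)), ?_⟩
    exact Fin.removeNth_insertNth _ _ _

end Tuples

lemma qFac_succ (q : ℂ) (k : ℕ) : qFac q (k + 1) = qFac q k * qInt q (k + 1) :=
  prod_range_succ _ _

lemma sum_pow_sub_eq_qInt (q : ℂ) (k : ℕ) : ∑ r : Fin (k + 1), q ^ (k - r) = qInt q (k + 1) := by
  rw [Fin.sum_univ_eq_sum_range (fun r => q ^ (k - r)), qInt, ← sum_range_reflect (q ^ ·)]
  simp only [Nat.add_sub_cancel]

section Border

variable (q : ℂ) {S : ℕ → Type} {d : ∀ n : ℕ, Fin (n + 2) → S (n + 1) → S n}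

lemma qBorderS_single (n : ℕ) (x : S (n + 1)) :
    qBorderS q S d (Finsupp.single ⟨n + 1, x⟩ 1) =
      ∑ i : Fin (n + 2), q ^ (i : ℕ) • Finsupp.single (⟨n, d n i x⟩ : Σ n, S n) 1 := by
  rw [qBorderS, Finsupp.lsum_single]
  simp only [LinearMap.coe_sum, Finset.sum_apply, LinearMap.smul_apply, Finsupp.lsingle_apply]

lemma qBorderS_pow_single (hd : SimplicialIdentity d) (m k : ℕ) (x : S (m + k)) :
    (qBorderS q S d ^ k) (Finsupp.single ⟨m + k, x⟩ 1) =
      qFac q k • ∑ f ∈ antitoneTuples k m,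
        q ^ (∑ t, (f t : ℕ)) • Finsupp.single (⟨m, dIter S d m k (faceSeq f) x⟩ : Σ n, S n) 1 := by
  induction k generalizing m with
  | zero =>
    rw [pow_zero, Module.End.one_apply, antitoneTuples, filter_true_of_mem fun f _ t => t.elim0,
      univ_unique, sum_singleton]
    simp [qFac, dIter]
  | succ k ih =>
    calc (qBorderS q S d ^ (k + 1)) (Finsupp.single ⟨m + (k + 1), x⟩ 1)
        = ∑ j : Fin (m + k + 2), q ^ (j : ℕ) •
            (qBorderS q S d ^ k) (Finsupp.single ⟨m + k, dNat S d (m + k) j x⟩ 1) := by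
          rw [pow_succ, Module.End.mul_apply]
          change (qBorderS q S d ^ k) (qBorderS q S d (Finsupp.single ⟨m + k + 1, x⟩ 1)) = _
          simp only [qBorderS_single, map_sum, map_smul, dNat_of_lt (Fin.isLt _), Fin.eta]
      _ = qFac q k • ∑ j : Fin (m + k + 2), ∑ f ∈ antitoneTuples k m,
            q ^ ((j : ℕ) + ∑ t, (f t : ℕ)) • Finsupp.single
              (⟨m, dIter S d m k (faceSeq f) (dNat S d (m + k) j x)⟩ : Σ n, S n) 1 := by
          simp only [ih, smul_sum, smul_smul, pow_add, mul_left_comm]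
      _ = qFac q k • ∑ g ∈ antitoneTuples (k + 1) m, ∑ r : Fin (k + 1), q ^ (k - r) •
            q ^ (∑ t, (g t : ℕ)) •
              Finsupp.single (⟨m, dIter S d m (k + 1) (faceSeq g) x⟩ : Σ n, S n) 1 := by
          rw [← sum_antitoneTuples_removeNth]
          refine congrArg _ (sum_congr rfl fun g hg => sum_congr rfl fun r _ => ?_)
          rw [dIter_removeNth hd (mem_antitoneTuples.mp hg), smul_smul, ← pow_add,
            Fin.sum_univ_succAbove _ r]
          rw [add_right_comm, add_comm]
          rfl
      _ = qFac q (k + 1) • ∑ g ∈ antitoneTuples (k + 1) m, q ^ (∑ t, (g t : ℕ)) •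
            Finsupp.single (⟨m, dIter S d m (k + 1) (faceSeq g) x⟩ : Σ n, S n) 1 := by
          simp only [← sum_smul, sum_pow_sub_eq_qInt, qFac_succ, mul_smul, smul_sum]

end Border

theorem qBorder_iteration_rule_general (q : ℂ)
    (S : ℕ → Type) (d : ∀ n : ℕ, Fin (n + 2) → S (n + 1) → S n)
    (hd : ∀ (n : ℕ) (i j : Fin (n + 2)), (j : ℕ) ≤ (i : ℕ) →
      ∀ x : S (n + 2), d n i (d (n + 1) j.castSucc x) = d n j (d (n + 1) i.succ x))
    (m k : ℕ) (x : S (m + k)) :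
    (qBorderS q S d ^ k) (Finsupp.single ⟨m + k, x⟩ 1) =
      qFac q k •
        ∑ f ∈ Finset.univ.filter
            (fun f : Fin k → Fin (m + 2) => ∀ t s : Fin k, t ≤ s → f s ≤ f t),
          q ^ (∑ t : Fin k, (f t : ℕ)) •
            Finsupp.single (⟨m, dIter S d m k (fun t => if h : t < k then (f ⟨t, h⟩ : ℕ) else 0) x⟩
              : Σ n : ℕ, S n) (1 : ℂ) :=
  qBorderS_pow_single q hd m k x

/-- Iteration rule for the q-analog border map: for a basic chain `x` of dimension `m + k`
with `0 ≤ k ≤ N`,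
`∂^k x = [k]_q! ∑_{i₁ ≤ ⋯ ≤ i_k} q^{i₁+⋯+i_k} ∂_{i_k} ⋯ ∂_{i_1} x`,
where `i_t = f (k - t)` runs over antitone tuples `f` with values `≤ m + 1`
(so `∂_{i_1} = ∂_{f (k-1)}` is applied first). -/
theorem qBorder_iteration_rule (N : ℕ) (hN : 2 ≤ N) (q : ℂ) (hq : IsPrimitiveRoot q N)
    (S : ℕ → Type) (d : ∀ n : ℕ, Fin (n + 2) → S (n + 1) → S n)
    (hd : ∀ (n : ℕ) (i j : Fin (n + 2)), (j : ℕ) ≤ (i : ℕ) →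
      ∀ x : S (n + 2), d n i (d (n + 1) j.castSucc x) = d n j (d (n + 1) i.succ x))
    (m k : ℕ) (hk : k ≤ N) (x : S (m + k)) :
    (qBorderS q S d ^ k) (Finsupp.single ⟨m + k, x⟩ 1) =
      qFac q k •
        ∑ f ∈ Finset.univ.filter
            (fun f : Fin k → Fin (m + 2) => ∀ t s : Fin k, t ≤ s → f s ≤ f t),
          q ^ (∑ t : Fin k, (f t : ℕ)) •
            Finsupp.single (⟨m, dIter S d m k (fun t => if h : t < k then (f ⟨t, h⟩ : ℕ) else 0) x⟩
              : Σ n : ℕ, S n) (1 : ℂ) :=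
  qBorder_iteration_rule_general q S d hd m k x
end
end

section
/- With ∂ = Σ_{i=0}^{n} q^i ∂_i on the (N,q)-complex of a simplicial set and q a primitive N-th root of unity, the N-fold composition ∂^N equals 0, since [N]_q = 0. -/
/-!
By the simplicial identities every composite of `k` faces of an `n`-simplex `x` equals
`∂_A x`, the face obtained by deleting a set `A ⊆ {0, …, n}` of `k` vertices. Expanding `∂^k`
and collecting terms by `A` gives, for `k ≤ n`,
`q^(k choose 2) ∂^k x = [k]_q! ∑_{#A = k} q^(∑ A) ∂_A x`:
in the inductive step the vertex `v ∈ A` deleted last sits at position `v - #{a ∈ A | a < v}`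
of `∂_{A \ {v}} x`, and summing `q^(k - #{a ∈ A | a < v})` over `v ∈ A` produces `[k+1]_q`.
Since `[N]_q = 0` is a factor of `[N]_q!`, `∂^N` kills every simplex of dimension at least `N`;
lower-dimensional ones are killed because `∂` lowers the dimension and vanishes in dimension `0`.
-/

noncomputable section

open Finset

namespace Nat

theorem sum_filter_count_eq_sum_range {M : Type*} [AddCommMonoid M] (p : ℕ → Prop)
    [DecidablePred p] (R : ℕ) (f : ℕ → M) :
    ∑ v ∈ (range R).filter p, f (count p v) = ∑ j ∈ range (count p R), f j := by
  have hinj : Set.InjOn (count p) ((range R).filter p) := fun m hm n hn h =>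
    count_injective (mem_filter.mp hm).2 (mem_filter.mp hn).2 h
  have himage : ((range R).filter p).image (count p) = range (count p R) := by
    refine eq_of_subset_of_card_le (fun j hj => ?_) ?_
    · obtain ⟨v, hv, rfl⟩ := mem_image.mp hj
      rw [mem_filter, mem_range] at hv
      exact mem_range.mpr (count_strict_mono hv.2 hv.1)
    · rw [Finset.card_image_of_injOn hinj, card_range, count_eq_card_filter_range]
  rw [← himage, sum_image hinj]

theorem count_add_count_not (p : ℕ → Prop) [DecidablePred p] (n : ℕ) :
    count p n + count (fun k => ¬ p k) n = n := by
  simp only [count_eq_card_filter_range, card_filter_add_card_filter_not, card_range]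

theorem count_mem_eq_card {A : Finset ℕ} {R : ℕ} (hA : A ⊆ range R) :
    count (· ∈ A) R = #A := by
  rw [count_eq_card_filter_range, filter_mem_eq_inter, inter_eq_right.mpr hA]

theorem count_mem_insert_of_le {A : Finset ℕ} {m v : ℕ} (hvm : v ≤ m) :
    count (· ∈ insert m A) v = count (· ∈ A) v := by
  refine le_antisymm (count_mono_left fun u hu h => ?_)
    (count_mono_left fun u _ h => mem_insert_of_mem h)
  rcases mem_insert.mp h with rfl | h
  · omega
  · exact h

end Nat

namespace Finset

theorem sum_powersetCard_sum_sdiff {α M : Type*} [DecidableEq α] [AddCommMonoid M]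
    (U : Finset α) (k : ℕ) (f : Finset α → α → M) :
    ∑ A ∈ U.powersetCard k, ∑ v ∈ U \ A, f A v =
      ∑ B ∈ U.powersetCard (k + 1), ∑ v ∈ B, f (B.erase v) v := by
  rw [sum_sigma', sum_sigma']
  refine sum_bij' (fun p _ => ⟨insert p.2 p.1, p.2⟩) (fun p _ => ⟨p.1.erase p.2, p.2⟩)
    ?_ ?_ ?_ ?_ ?_
  all_goals grind [erase_insert, insert_erase]

end Finset

namespace QBorder

def SimplicialIdentities {S : ℕ → Type} (d : ∀ n : ℕ, Fin (n + 2) → S (n + 1) → S n) : Prop :=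
  ∀ (n : ℕ) (i j : Fin (n + 2)), (j : ℕ) ≤ (i : ℕ) →
    ∀ x : S (n + 2), d n i (d (n + 1) j.castSucc x) = d n j (d (n + 1) i.succ x)

variable {S : ℕ → Type} (d : ∀ n : ℕ, Fin (n + 2) → S (n + 1) → S n)

/-- Totalized: indices above the dimension act as the last face, and `0`-simplices are fixed. -/
def face (i : ℕ) : (Σ n, S n) → (Σ n, S n)
  | ⟨0, x⟩ => ⟨0, x⟩
  | ⟨n + 1, x⟩ => ⟨n, d n ⟨min i (n + 1), by omega⟩ x⟩

@[simp]
theorem face_fst (i : ℕ) (t : Σ n, S n) : (face d i t).1 = t.1 - 1 := by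
  obtain ⟨_ | n, x⟩ := t <;> rfl

variable {d}

theorem face_face (hd : SimplicialIdentities d) {i j : ℕ} (hji : j ≤ i) {t : Σ n, S n}
    (hi : i < t.1) (ht : 2 ≤ t.1) :
    face d j (face d (i + 1) t) = face d i (face d j t) := by
  obtain ⟨_ | _ | n, x⟩ := t
  all_goals simp only at hi ht
  · omega
  · omega
  have := hd n ⟨i, hi⟩ ⟨j, by omega⟩ hji x
  simp only [face, Nat.min_eq_left (by omega : i ≤ n + 1), Nat.min_eq_left (by omega : j ≤ n + 1),
    Nat.min_eq_left (by omega : i + 1 ≤ n + 2), Nat.min_eq_left (by omega : j ≤ n + 2)]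
  exact congrArg (Sigma.mk n) this.symm

variable (d) in
/-- Deletes the vertices in `A` from the largest down, so that every element of `A` still names
a vertex of the original simplex when its face is taken. -/
def faces (A : Finset ℕ) (t : Σ n, S n) : Σ n, S n :=
  (A.sort (· ≥ ·)).foldl (fun t i => face d i t) t

@[simp]
theorem faces_empty (t : Σ n, S n) : faces d ∅ t = t := by simp [faces]

theorem faces_insert_of_forall_lt {A : Finset ℕ} {v : ℕ} (hA : ∀ a ∈ A, a < v)
    (t : Σ n, S n) : faces d (insert v A) t = faces d A (face d v t) := by
  rw [faces, sort_insert _ (fun a ha => (hA a ha).le) (fun hv => (hA v hv).false)]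
  rfl

@[simp]
theorem faces_fst (A : Finset ℕ) (t : Σ n, S n) : (faces d A t).1 = t.1 - #A := by
  induction A using Finset.induction_on_max generalizing t with
  | empty => simp
  | insert v A hA ih =>
    rw [faces_insert_of_forall_lt hA, ih, face_fst,
      card_insert_of_notMem (fun hv => (hA v hv).false)]
    omega

theorem faces_face_of_forall_lt (hd : SimplicialIdentities d) {A : Finset ℕ} {v : ℕ}
    {t : Σ n, S n} (hA : ∀ a ∈ A, a < v) (hv : v ≤ t.1) (hAt : #A < t.1) :
    faces d A (face d v t) = face d (v - #A) (faces d A t) := by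
  induction A using Finset.induction_on_max generalizing v t with
  | empty => simp
  | insert m A hAm ih =>
    have hm : m < v := hA m (mem_insert_self m A)
    rw [card_insert_of_notMem (fun h => (hAm m h).false)] at hAt ⊢
    have hface : face d m (face d v t) = face d (v - 1) (face d m t) := by
      have := face_face hd (i := v - 1) (j := m) (t := t) (by omega) (by omega) (by omega)
      rwa [Nat.sub_add_cancel (by omega)] at this
    rw [faces_insert_of_forall_lt hAm, faces_insert_of_forall_lt hAm, hface,
      ih (fun a ha => by have := hAm a ha; omega) (by simp only [face_fst]; omega)
      (by simp only [face_fst]; omega)]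
    congr 1
    omega

theorem faces_insert (hd : SimplicialIdentities d) {A : Finset ℕ} {v : ℕ} {t : Σ n, S n}
    (hA : A ⊆ range (t.1 + 1)) (hv : v ∈ range (t.1 + 1) \ A) (hAt : #A < t.1) :
    faces d (insert v A) t = face d (v - Nat.count (· ∈ A) v) (faces d A t) := by
  induction A using Finset.induction_on_max generalizing t with
  | empty => rw [faces_insert_of_forall_lt (by simp)]; simp
  | insert m A hAm ih =>
    have hmA : m ∉ A := fun h => (hAm m h).false
    have hvm : v ≠ m := fun h => (mem_sdiff.mp hv).2 (h ▸ mem_insert_self m A)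
    have hvt : v ≤ t.1 := Nat.lt_succ_iff.mp (mem_range.mp (mem_sdiff.mp hv).1)
    have hmt : m ≤ t.1 := Nat.lt_succ_iff.mp (mem_range.mp (hA (mem_insert_self m A)))
    rw [card_insert_of_notMem hmA] at hAt
    rcases lt_or_gt_of_ne hvm with hlt | hgt
    · rw [insert_comm, faces_insert_of_forall_lt ((forall_mem_insert _ _ _).mpr ⟨hlt, hAm⟩),
        faces_insert_of_forall_lt hAm, Nat.count_mem_insert_of_le hlt.le, ih]
      · intro a ha
        have := hAm a ha
        simp only [face_fst, mem_range]
        omega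
      · simp only [face_fst, mem_sdiff, mem_range]
        exact ⟨by omega, fun h => (mem_sdiff.mp hv).2 (mem_insert_of_mem h)⟩
      · simp only [face_fst]
        omega
    · have hAv : ∀ a ∈ insert m A, a < v :=
        (forall_mem_insert _ _ _).mpr ⟨hgt, fun a ha => (hAm a ha).trans hgt⟩
      rw [faces_insert_of_forall_lt hAv, faces_face_of_forall_lt hd hAv hvt
        (by rw [card_insert_of_notMem hmA]; exact hAt),
        Nat.count_mem_eq_card fun a ha => mem_range.mpr (hAv a ha)]

def qFact (q : ℂ) (k : ℕ) : ℂ := ∏ i ∈ range k, qInt q (i + 1)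

theorem qFact_succ (q : ℂ) (k : ℕ) : qFact q (k + 1) = qFact q k * qInt q (k + 1) :=
  prod_range_succ _ _

theorem qFact_eq_zero_of_isPrimitiveRoot {q : ℂ} {N : ℕ} (hq : IsPrimitiveRoot q N)
    (hN : 1 < N) : qFact q N = 0 :=
  prod_eq_zero (i := N - 1) (mem_range.mpr (by omega)) <| by
    rw [Nat.sub_add_cancel (by omega), qInt, hq.geom_sum_eq_zero hN]

variable (q : ℂ)

theorem qBorderS_single_of_fst_eq_zero {t : Σ n, S n} (ht : t.1 = 0) (c : ℂ) :
    qBorderS q S d (Finsupp.single t c) = 0 := by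
  obtain ⟨_, x⟩ := t
  subst ht
  simp [qBorderS]

theorem qBorderS_single {t : Σ n, S n} (ht : t.1 ≠ 0) :
    qBorderS q S d (Finsupp.single t 1) =
      ∑ i ∈ range (t.1 + 1), q ^ i • Finsupp.single (face d i t) 1 := by
  obtain ⟨_ | n, x⟩ := t
  · exact absurd rfl ht
  rw [qBorderS, Finsupp.lsum_single, LinearMap.sum_apply, ← Fin.sum_univ_eq_sum_range]
  refine sum_congr rfl fun i _ => ?_
  simp only [LinearMap.smul_apply, Finsupp.lsingle_apply, face,
    Nat.min_eq_left (Nat.lt_succ_iff.mp i.isLt)]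

theorem qBorderS_pow_single_of_fst_lt {m : ℕ} {t : Σ n, S n} (ht : t.1 < m) :
    (qBorderS q S d ^ m) (Finsupp.single t 1) = 0 := by
  induction m generalizing t with
  | zero => omega
  | succ m ih =>
    rw [pow_succ, Module.End.mul_apply]
    rcases eq_or_ne t.1 0 with h0 | h0
    · rw [qBorderS_single_of_fst_eq_zero q h0, map_zero]
    · rw [qBorderS_single q h0, map_sum]
      exact sum_eq_zero fun i _ => by
        rw [map_smul, ih (by simp only [face_fst]; omega), smul_zero]

theorem qBorderS_single_faces (hd : SimplicialIdentities d) {A : Finset ℕ} {t : Σ n, S n}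
    (hA : A ⊆ range (t.1 + 1)) (hAt : #A < t.1) :
    qBorderS q S d (Finsupp.single (faces d A t) 1) =
      ∑ v ∈ range (t.1 + 1) \ A,
        q ^ (v - Nat.count (· ∈ A) v) • Finsupp.single (faces d (insert v A) t) 1 := by
  have hcount (v : ℕ) : v - Nat.count (· ∈ A) v = Nat.count (· ∉ A) v := by
    have := Nat.count_add_count_not (· ∈ A) v
    omega
  have hR : Nat.count (· ∉ A) (t.1 + 1) = t.1 - #A + 1 := by
    have := Nat.count_add_count_not (· ∈ A) (t.1 + 1)
    rw [Nat.count_mem_eq_card hA] at this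
    omega
  rw [qBorderS_single q (by simp only [faces_fst]; omega), faces_fst, ← hR, sdiff_eq_filter,
    ← Nat.sum_filter_count_eq_sum_range (· ∉ A) _
      (fun j => q ^ j • Finsupp.single (face d j (faces d A t)) 1)]
  refine sum_congr rfl fun v hv => ?_
  rw [faces_insert hd hA (by rwa [sdiff_eq_filter]) hAt, hcount]

theorem sum_pow_sub_count_mem {B : Finset ℕ} {R k : ℕ} (hB : B ⊆ range R) (hBk : #B = k + 1) :
    ∑ v ∈ B, q ^ (k - Nat.count (· ∈ B) v) = qInt q (k + 1) := by
  have hfilter : (range R).filter (· ∈ B) = B := by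
    rw [filter_mem_eq_inter, inter_eq_right.mpr hB]
  have := Nat.sum_filter_count_eq_sum_range (· ∈ B) R (fun j => q ^ (k - j))
  rw [hfilter, Nat.count_mem_eq_card hB, hBk] at this
  rw [this, qInt, ← sum_range_reflect]
  refine sum_congr rfl fun j hj => ?_
  rw [mem_range] at hj
  congr 1
  omega

theorem add_sum_erase_add_sub_count_mem {B : Finset ℕ} {k v : ℕ} (hBk : #B = k + 1)
    (hv : v ∈ B) :
    k + ∑ a ∈ B.erase v, a + (v - Nat.count (· ∈ B.erase v) v) =
      (k - Nat.count (· ∈ B) v) + ∑ a ∈ B, a := by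
  have hsum := sum_erase_add B (fun a => a) hv
  have hcount : Nat.count (· ∈ B.erase v) v = Nat.count (· ∈ B) v := by
    conv_rhs => rw [← insert_erase hv]
    exact (Nat.count_mem_insert_of_le le_rfl).symm
  have hle_card : Nat.count (· ∈ B.erase v) v ≤ k := by
    have := card_erase_of_mem hv
    rw [Nat.count_eq_card_filter_range]
    exact (card_le_card fun a ha => (mem_filter.mp ha).2).trans (by omega)
  have hle := Nat.count_le (p := (· ∈ B)) (n := v)
  omega

theorem qBorderS_pow_single (hd : SimplicialIdentities d) {k : ℕ} {t : Σ n, S n} (hk : k ≤ t.1) :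
    q ^ k.choose 2 • (qBorderS q S d ^ k) (Finsupp.single t 1) =
      qFact q k • ∑ A ∈ (range (t.1 + 1)).powersetCard k,
        q ^ (∑ a ∈ A, a) • Finsupp.single (faces d A t) 1 := by
  induction k with
  | zero => simp [qFact]
  | succ k ih =>
    set U := range (t.1 + 1)
    calc q ^ (k + 1).choose 2 • (qBorderS q S d ^ (k + 1)) (Finsupp.single t 1)
        = q ^ k •
            qBorderS q S d (q ^ k.choose 2 • (qBorderS q S d ^ k) (Finsupp.single t 1)) := by
          rw [Nat.choose_succ_succ', Nat.choose_one_right, pow_add, mul_smul, pow_succ',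
            Module.End.mul_apply, map_smul]
      _ = qFact q k • ∑ A ∈ U.powersetCard k, ∑ v ∈ U \ A,
            q ^ (k + ∑ a ∈ A, a + (v - Nat.count (· ∈ A) v)) •
              Finsupp.single (faces d (insert v A) t) 1 := by
          rw [ih (by omega), map_smul, map_sum, smul_comm, smul_sum]
          refine congrArg _ (sum_congr rfl fun A hA => ?_)
          rw [mem_powersetCard] at hA
          rw [map_smul, qBorderS_single_faces q hd hA.1 (by omega), smul_sum, smul_sum]
          refine sum_congr rfl fun v _ => ?_
          rw [smul_smul, smul_smul, ← pow_add, ← pow_add]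
      _ = qFact q k • ∑ B ∈ U.powersetCard (k + 1), ∑ v ∈ B,
            q ^ ((k - Nat.count (· ∈ B) v) + ∑ a ∈ B, a) • Finsupp.single (faces d B t) 1 := by
          rw [sum_powersetCard_sum_sdiff]
          refine congrArg _ (sum_congr rfl fun B hB => sum_congr rfl fun v hv => ?_)
          rw [insert_erase hv, add_sum_erase_add_sub_count_mem (mem_powersetCard.mp hB).2 hv]
      _ = qFact q (k + 1) • ∑ B ∈ U.powersetCard (k + 1),
            q ^ (∑ a ∈ B, a) • Finsupp.single (faces d B t) 1 := by
          rw [qFact_succ, mul_smul]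
          congr 1
          rw [smul_sum]
          refine sum_congr rfl fun B hB => ?_
          rw [mem_powersetCard] at hB
          simp only [pow_add]
          rw [← sum_smul, ← sum_mul, sum_pow_sub_count_mem q hB.1 hB.2, mul_smul]

end QBorder

open QBorder

/-- For a simplicial set with `∂ᵢ∂ⱼ = ∂ⱼ∂_{i+1}` for `j ≤ i` and `q` a primitive `N`-th
root of unity, the `N`-fold composition of the border `∂ = ∑ qⁱ ∂ᵢ` vanishes. -/
theorem qBorder_pow_N_eq_zero (N : ℕ) (hN : 2 ≤ N) (q : ℂ) (hq : IsPrimitiveRoot q N)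
    (S : ℕ → Type) (d : ∀ n : ℕ, Fin (n + 2) → S (n + 1) → S n)
    (hd : ∀ (n : ℕ) (i j : Fin (n + 2)), (j : ℕ) ≤ (i : ℕ) →
      ∀ x : S (n + 2), d n i (d (n + 1) j.castSucc x) = d n j (d (n + 1) i.succ x)) :
    qBorderS q S d ^ N = 0 := by
  refine Finsupp.lhom_ext' fun t => LinearMap.ext_ring ?_
  simp only [LinearMap.comp_apply, Finsupp.lsingle_apply, LinearMap.zero_apply]
  rcases lt_or_ge t.1 N with hlt | hle
  · exact qBorderS_pow_single_of_fst_lt q hlt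
  · have h := qBorderS_pow_single q hd hle
    rwa [qFact_eq_zero_of_isPrimitiveRoot hq (by omega), zero_smul,
      smul_eq_zero_iff_right (pow_ne_zero _ (hq.ne_zero (by omega)))] at h
end
end

section
/- Let P be a one-point topological space. The module of singular q-chains of dimension n on P is free of rank 1 over ℤ[q], and the border map ∂ : C_n → C_{n-1} is multiplication by [n+1]_q. Consequently the m-amplitude homology of P in degree n is ℤ[q] when 0 ≤ n = m-1 ≤ N-2 and is 0 otherwise. -/
open Finset
open scoped NNReal

set_option maxHeartbeats 1000000
set_option synthInstance.maxHeartbeats 400000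

noncomputable section


/-- The subring `ℤ[q] ⊆ ℂ`. -/
def Zq (q : ℂ) : Subring ℂ := Subring.closure {q}

/-- `q` as an element of `ℤ[q]`. -/
def qR (q : ℂ) : Zq q := ⟨q, Subring.subset_closure rfl⟩

/-- The q-integer `[k]_q` as an element of `ℤ[q]`. -/
def qIntR (q : ℂ) (k : ℕ) : Zq q := ∑ i ∈ Finset.range k, qR q ^ i
/-- The standard topological `n`-simplex. -/
def TopSimplex (n : ℕ) : Type := {f : Fin (n + 1) → ℝ≥0 // ∑ i, f i = 1}

instance (n : ℕ) : TopologicalSpace (TopSimplex n) :=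
  instTopologicalSpaceSubtype

/-- The affine inclusion `Δ^n → Δ^{n+1}` omitting the `i`-th vertex. -/
def faceIncl {n : ℕ} (i : Fin (n + 2)) : C(TopSimplex n, TopSimplex (n + 1)) where
  toFun f := ⟨fun j => ∑ k ∈ Finset.univ.filter (fun k : Fin (n + 1) => i.succAbove k = j),
      f.1 k, by
    have := Finset.sum_fiberwise_of_maps_to (g := fun k : Fin (n + 1) => i.succAbove k)
      (fun k (_ : k ∈ Finset.univ) => Finset.mem_univ (i.succAbove k)) f.1
    rw [this]
    exact f.2⟩
  continuous_toFun := by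
    apply Continuous.subtype_mk
    exact continuous_pi fun j =>
      continuous_finset_sum _ fun k _ => (continuous_apply k).comp continuous_subtype_val

/-- A singular `n`-simplex in `X`. -/
abbrev SSimplex (n : ℕ) (X : Type) [TopologicalSpace X] := C(TopSimplex n, X)

/-- The `i`-th face of a singular `(n+1)`-simplex. -/
def sFace {X : Type} [TopologicalSpace X] {n : ℕ} (i : Fin (n + 2)) (σ : SSimplex (n + 1) X) :
    SSimplex n X :=
  σ.comp (faceIncl i)

/-- The total module of singular q-chains over `ℤ[q]`. -/
abbrev QChainsR (q : ℂ) (X : Type) [TopologicalSpace X] : Type :=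
  (Σ n : ℕ, SSimplex n X) →₀ Zq q

/-- The q-analog border map `∂ = ∑ᵢ qⁱ ∂ᵢ` on singular q-chains over `ℤ[q]`. -/
def qBorderR (q : ℂ) (X : Type) [TopologicalSpace X] : QChainsR q X →ₗ[Zq q] QChainsR q X :=
  Finsupp.lsum (Zq q) fun s =>
    match s with
    | ⟨0, _⟩ => 0
    | ⟨n + 1, σ⟩ => ∑ i : Fin (n + 2),
        qR q ^ (i : ℕ) •
          (Finsupp.lsingle (⟨n, sFace i σ⟩ : Σ n : ℕ, SSimplex n X) :
            Zq q →ₗ[Zq q] QChainsR q X)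

/-- The submodule of q-chains of degree `n`. -/
def degR (q : ℂ) (X : Type) [TopologicalSpace X] (n : ℕ) : Submodule (Zq q) (QChainsR q X) :=
  Finsupp.supported (Zq q) (Zq q) {s : Σ k : ℕ, SSimplex k X | s.1 = n}

/-!
On a point there is one singular simplex `eₙ` in each dimension and all its faces coincide, so
`∂ eₙ₊₁ = (1 + q + ⋯ + q^(n+1)) eₙ = [n+2]_q eₙ`, and `∂^d eₙ₊d = [n+2]_q ⋯ [n+d+1]_q eₙ`.
Because `q` is a primitive `N`-th root of unity, `[k]_q` only depends on `k mod N`: it vanishes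
when `N ∣ k` and, `N` being prime, is a unit of `ℤ[q]` otherwise.

In degree `n`, the kernel of `∂^m` and the image of `∂^(N-m)` are thus governed by the windows
`n-m+2 ≤ j ≤ n+1` and `n+2 ≤ j ≤ n+N-m+1` of q-integers `[j]_q`. Together they are `N`
consecutive integers and contain a single multiple of `N`: if it lies in the first window,
`∂^(N-m)` is onto `Cₙ`, otherwise `∂^m` is injective on `Cₙ`. The exception is `n < m`, where
`∂^m` kills `Cₙ` for degree reasons; then `∂^(N-m)` is onto `Cₙ` unless the second window reaches
`N`, i.e. unless `n = m - 1`, and in that case `∂^(N-m)` vanishes on `Cₙ₊N₋ₘ` and the homology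
is `Cₙ ≅ ℤ[q]`.
-/

section QInt

variable {q : ℂ}

lemma qIntR_add (a b : ℕ) : qIntR q (a + b) = qIntR q a + qR q ^ a * qIntR q b := by
  simp only [qIntR, Finset.sum_range_add, Finset.mul_sum, ← pow_add]

lemma qIntR_mul (k l : ℕ) :
    qIntR q (k * l) = qIntR q k * ∑ j ∈ range l, qR q ^ (k * j) := by
  induction l with
  | zero => simp [qIntR]
  | succ l ih =>
    rw [Nat.mul_succ, qIntR_add, ih, sum_range_succ]
    ring

lemma qIntR_one : qIntR q 1 = 1 := by
  simp [qIntR]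

variable {N : ℕ}

lemma IsPrimitiveRoot.qIntR_self_eq_zero (hq : IsPrimitiveRoot q N) (hN : 1 < N) :
    qIntR q N = 0 :=
  Subtype.ext <| by simpa [qIntR, qR] using hq.geom_sum_eq_zero hN

lemma IsPrimitiveRoot.qIntR_mod (hq : IsPrimitiveRoot q N) (hN : 1 < N) (a : ℕ) :
    qIntR q (a % N) = qIntR q a := by
  have periodic (b t : ℕ) : qIntR q (b + N * t) = qIntR q b := by
    induction t with
    | zero => simp
    | succ t ih =>
      rw [Nat.mul_succ, ← add_assoc, qIntR_add, ih, hq.qIntR_self_eq_zero hN, mul_zero, add_zero]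
  rw [← periodic (a % N) (a / N), Nat.mod_add_div]

/-- If `k * l ≡ 1 (mod N)` then `[k]_q * (1 + q^k + ⋯ + q^{k(l-1)}) = [kl]_q = [1]_q = 1`. -/
lemma IsPrimitiveRoot.isUnit_qIntR (hq : IsPrimitiveRoot q N) (hN : 1 < N) {k : ℕ}
    (hk : k.Coprime N) : IsUnit (qIntR q k) := by
  obtain ⟨l, -, hl⟩ := Nat.exists_mul_mod_eq_one_of_coprime hk hN
  refine .of_mul_eq_one (∑ j ∈ range l, qR q ^ (k * j)) ?_
  rw [← qIntR_mul, ← hq.qIntR_mod hN, hl, qIntR_one]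

/-- `[n+d+1]_q! / [n+1]_q!`, the scalar by which `∂^d` maps `C_{n+d}` to `C_n` on a point. -/
def qIntProd (q : ℂ) (n d : ℕ) : Zq q := ∏ i ∈ range d, qIntR q (n + 2 + i)

lemma qIntProd_succ (n d : ℕ) : qIntProd q n (d + 1) = qIntProd q n d * qIntR q (n + d + 2) := by
  rw [qIntProd, prod_range_succ, add_right_comm]
  rfl

lemma isUnit_qIntProd (hN : N.Prime) (hq : IsPrimitiveRoot q N) {n d : ℕ}
    (h : ∀ i < d, ¬ N ∣ n + 2 + i) : IsUnit (qIntProd q n d) :=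
  prod_induction _ IsUnit (fun _ _ => IsUnit.mul) isUnit_one fun i hi =>
    hq.isUnit_qIntR hN.one_lt ((hN.coprime_iff_not_dvd.mpr (h i (mem_range.mp hi))).symm)

lemma qIntProd_eq_zero (hN : 1 < N) (hq : IsPrimitiveRoot q N) {n d i : ℕ} (hi : i < d)
    (h : n + 2 + i = N) : qIntProd q n d = 0 :=
  prod_eq_zero (mem_range.mpr hi) (h ▸ hq.qIntR_self_eq_zero hN)

end QInt

lemma qBorderR_single_succ {X : Type} [TopologicalSpace X] (q : ℂ) {n : ℕ}
    (σ : SSimplex (n + 1) X) (a : Zq q) :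
    qBorderR q X (Finsupp.single ⟨n + 1, σ⟩ a) =
      ∑ i : Fin (n + 2), qR q ^ (i : ℕ) • Finsupp.single ⟨n, sFace i σ⟩ a := by
  rw [qBorderR, Finsupp.lsum_single]
  simp only [LinearMap.sum_apply, LinearMap.smul_apply, Finsupp.lsingle_apply]

lemma qBorderR_single_zero {X : Type} [TopologicalSpace X] (q : ℂ) (σ : SSimplex 0 X)
    (a : Zq q) : qBorderR q X (Finsupp.single ⟨0, σ⟩ a) = 0 := by
  rw [qBorderR, Finsupp.lsum_single]
  rfl

instance (n : ℕ) : Unique (SSimplex n PUnit) where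
  default := ContinuousMap.const _ PUnit.unit
  uniq _ := ContinuousMap.ext fun _ => rfl

def pointSimplex (n : ℕ) : Σ k : ℕ, SSimplex k PUnit := ⟨n, default⟩

section Point

variable {q : ℂ}

lemma qBorderR_single_pointSimplex_succ (n : ℕ) (a : Zq q) :
    qBorderR q PUnit (Finsupp.single (pointSimplex (n + 1)) a) =
      qIntR q (n + 2) • Finsupp.single (pointSimplex n) a := by
  simp only [pointSimplex, qBorderR_single_succ, Subsingleton.elim (sFace _ _) default,
    ← Finset.sum_smul, qIntR, Fin.sum_univ_eq_sum_range (fun i => qR q ^ i)]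

lemma qBorderR_pow_single_pointSimplex (n d : ℕ) (a : Zq q) :
    (qBorderR q PUnit ^ d) (Finsupp.single (pointSimplex (n + d)) a) =
      Finsupp.single (pointSimplex n) (qIntProd q n d * a) := by
  induction d with
  | zero => simp [qIntProd]
  | succ d ih =>
    rw [pow_succ, Module.End.mul_apply, ← add_assoc, qBorderR_single_pointSimplex_succ, map_smul,
      ih, Finsupp.smul_single, smul_eq_mul, qIntProd_succ]
    ring_nf

lemma qBorderR_pow_single_pointSimplex_of_lt {n d : ℕ} (h : n < d) (a : Zq q) :
    (qBorderR q PUnit ^ d) (Finsupp.single (pointSimplex n) a) = 0 := by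
  have hkill (n : ℕ) (a : Zq q) :
      (qBorderR q PUnit ^ (n + 1)) (Finsupp.single (pointSimplex n) a) = 0 := by
    induction n generalizing a with
    | zero => rw [pow_one]; exact qBorderR_single_zero q _ a
    | succ n ih =>
      rw [pow_succ, Module.End.mul_apply, qBorderR_single_pointSimplex_succ, map_smul, ih,
        smul_zero]
  obtain ⟨e, rfl⟩ : ∃ e, d = e + (n + 1) := ⟨d - (n + 1), by omega⟩
  rw [pow_add, Module.End.mul_apply, hkill, map_zero]

lemma mem_degR_point_iff {n : ℕ} {x : QChainsR q PUnit} :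
    x ∈ degR q PUnit n ↔ x = Finsupp.single (pointSimplex n) (x (pointSimplex n)) := by
  rw [degR, Finsupp.mem_supported, ← Finsupp.support_subset_singleton]
  refine ⟨fun h s hs => ?_, fun h s hs => ?_⟩
  · obtain ⟨k, σ⟩ := s
    obtain rfl : k = n := h hs
    rw [Subsingleton.elim σ default]
    exact mem_singleton_self _
  · rw [mem_singleton.mp (h hs)]
    rfl

lemma single_pointSimplex_mem_degR (n : ℕ) (a : Zq q) :
    Finsupp.single (pointSimplex n) a ∈ degR q PUnit n := by
  rw [mem_degR_point_iff, Finsupp.single_eq_same]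

lemma degR_point_le_ker_pow {n d : ℕ} (h : n < d) :
    degR q PUnit n ≤ LinearMap.ker (qBorderR q PUnit ^ d) := fun x hx => by
  rw [mem_degR_point_iff.mp hx, LinearMap.mem_ker, qBorderR_pow_single_pointSimplex_of_lt h]

lemma ker_pow_inf_degR_point_eq_bot {n d : ℕ} (hu : IsUnit (qIntProd q n d)) :
    LinearMap.ker (qBorderR q PUnit ^ d) ⊓ degR q PUnit (n + d) = ⊥ := by
  refine eq_bot_iff.mpr fun x hx => ?_
  obtain ⟨hker, hdeg⟩ := Submodule.mem_inf.mp hx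
  rw [mem_degR_point_iff.mp hdeg, LinearMap.mem_ker, qBorderR_pow_single_pointSimplex,
    Finsupp.single_eq_zero, hu.mul_right_eq_zero] at hker
  rw [mem_degR_point_iff.mp hdeg, hker, Finsupp.single_zero]
  exact zero_mem _

lemma degR_point_le_map_pow {n d : ℕ} (hu : IsUnit (qIntProd q n d)) :
    degR q PUnit n ≤ Submodule.map (qBorderR q PUnit ^ d) (degR q PUnit (n + d)) := by
  intro x hx
  refine ⟨_, single_pointSimplex_mem_degR (n + d) (((hu.unit⁻¹ : (Zq q)ˣ) : Zq q) * x (pointSimplex n)), ?_⟩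
  rw [qBorderR_pow_single_pointSimplex, ← mul_assoc, hu.mul_val_inv, one_mul]
  exact (mem_degR_point_iff.mp hx).symm

lemma map_pow_degR_point_eq_bot {n d : ℕ} (h0 : qIntProd q n d = 0) :
    Submodule.map (qBorderR q PUnit ^ d) (degR q PUnit (n + d)) = ⊥ := by
  refine eq_bot_iff.mpr fun x ⟨y, hy, hyx⟩ => ?_
  rw [← hyx, mem_degR_point_iff.mp hy, qBorderR_pow_single_pointSimplex, h0, zero_mul,
    Finsupp.single_zero]
  exact zero_mem _

end Point

/-- q-homology of a point: the module of `n`-dimensional singular q-chains on a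
one-point space is free of rank 1 over `ℤ[q]`, the border map `∂ : C_{n+1} → C_n` is
multiplication by `[n+2]_q`, and the `m`-amplitude homology in degree `n`
(the quotient of `ker ∂^m ∩ C_n` by `∂^{N-m}(C_{n+N-m})`) is `ℤ[q]` when
`0 ≤ n = m - 1 ≤ N - 2` and is `0` otherwise. -/
theorem point_q_homology (N : ℕ) (hN : N.Prime) (q : ℂ) (hq : IsPrimitiveRoot q N) :
    (∀ n : ℕ, Nonempty ((SSimplex n PUnit →₀ Zq q) ≃ₗ[Zq q] Zq q)) ∧
    (∀ (n : ℕ) (σ : SSimplex (n + 1) PUnit) (a : Zq q),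
      qBorderR q PUnit (Finsupp.single ⟨n + 1, σ⟩ a) =
        qIntR q (n + 2) • Finsupp.single (⟨n, sFace 0 σ⟩ : Σ k : ℕ, SSimplex k PUnit) a) ∧
    (∀ m n : ℕ, 1 ≤ m → m ≤ N - 1 →
      ((m = n + 1 ∧ n ≤ N - 2) →
        ∃ φ : QChainsR q PUnit →ₗ[Zq q] Zq q,
          Submodule.map φ (LinearMap.ker (qBorderR q PUnit ^ m) ⊓ degR q PUnit n) = ⊤ ∧
          ∀ x ∈ LinearMap.ker (qBorderR q PUnit ^ m) ⊓ degR q PUnit n,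
            (φ x = 0 ↔ x ∈ Submodule.map (qBorderR q PUnit ^ (N - m))
              (degR q PUnit (n + (N - m))))) ∧
      (¬(m = n + 1 ∧ n ≤ N - 2) →
        LinearMap.ker (qBorderR q PUnit ^ m) ⊓ degR q PUnit n ≤
          Submodule.map (qBorderR q PUnit ^ (N - m)) (degR q PUnit (n + (N - m))))) := by
  refine ⟨fun n => ⟨Finsupp.uniqueLinearEquiv _ _ default⟩, fun n σ a => ?_,
    fun m n hm hmN => ⟨fun ⟨hmn, hn⟩ => ?_, fun hnot => ?_⟩⟩
  · rw [Subsingleton.elim σ default, Subsingleton.elim (sFace 0 _) default]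
    exact qBorderR_single_pointSimplex_succ n a
  · subst hmn
    have hker : LinearMap.ker (qBorderR q PUnit ^ (n + 1)) ⊓ degR q PUnit n = degR q PUnit n :=
      inf_eq_right.mpr (degR_point_le_ker_pow n.lt_succ_self)
    have himage := map_pow_degR_point_eq_bot (q := q) (n := n) (d := N - (n + 1))
      (qIntProd_eq_zero hN.one_lt hq (i := N - n - 2) (by omega) (by omega))
    refine ⟨Finsupp.lapply (pointSimplex n), ?_, fun x hx => ?_⟩
    · rw [hker, eq_top_iff]
      exact fun a _ => ⟨_, single_pointSimplex_mem_degR n a, Finsupp.single_eq_same⟩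
    · rw [hker, mem_degR_point_iff] at hx
      rw [himage, Submodule.mem_bot, Finsupp.lapply_apply]
      conv_rhs => rw [hx]
      exact Finsupp.single_eq_zero.symm
  · rcases lt_or_ge n m with hlt | hge
    · refine inf_le_right.trans (degR_point_le_map_pow (isUnit_qIntProd hN hq fun i hi hdvd => ?_))
      exact Nat.not_dvd_of_pos_of_lt (by omega) (by omega) hdvd
    obtain ⟨k, rfl⟩ := Nat.exists_eq_add_of_le' hge
    by_cases hwin : ∃ j < m, N ∣ k + 2 + j
    · obtain ⟨j, hj, hdvd⟩ := hwin
      -- `∂^m` and `∂^(N-m)` together sweep `N` consecutive q-integers, so only one hits `[N]`.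
      refine inf_le_right.trans (degR_point_le_map_pow (isUnit_qIntProd hN hq fun i hi hdvd' => ?_))
      exact Nat.not_dvd_of_pos_of_lt (by omega) (by omega) (Nat.dvd_sub hdvd' hdvd)
    · rw [ker_pow_inf_degR_point_eq_bot (isUnit_qIntProd hN hq fun j hj hdvd => hwin ⟨j, hj, hdvd⟩)]
      exact bot_le
end
end

section
/- Homotopic morphisms of N-complexes induce equal maps on every amplitude homology: if f, g : (M, ∂) → (M', ∂') are morphisms of N-complexes and there exist module maps K_m : M → M' with Σ_{m=0}^{N-1} (∂')^m K_m ∂^{N-m-1} = f - g, then f and g induce the same map H_k(M) → H_k(M') for each amplitude 1 ≤ k ≤ N-1. -/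
open LinearMap

theorem pow_apply_pow_apply_mem_range_of_mem_ker_pow {R M M' : Type*} [Semiring R]
    [AddCommMonoid M] [Module R M] [AddCommMonoid M'] [Module R M']
    {D : Module.End R M} {D' : Module.End R M'} (L : M →ₗ[R] M') {n k : ℕ} {x : M}
    (hx : x ∈ ker (D ^ k)) (m : ℕ) :
    (D' ^ m) (L ((D ^ (n - m - 1)) x)) ∈ range (D' ^ (n - k)) := by
  by_cases hkm : k ≤ n - m - 1
  · have hzero : (D ^ (n - m - 1)) x = 0 := D.iterateKer.monotone hkm hx
    simp [hzero]
  · exact D'.iterateRange.monotone (by omega : n - k ≤ m) (mem_range_self _ _)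

theorem homotopic_induce_equal_on_amplitude_homology_general
    (R : Type*) [CommRing R] (M M' : Type*)
    [AddCommGroup M] [Module R M] [AddCommGroup M'] [Module R M']
    (N : ℕ)
    (D : M →ₗ[R] M) (D' : M' →ₗ[R] M')
    (f g : M →ₗ[R] M')
    (K : ℕ → (M →ₗ[R] M'))
    (hK : ∑ m ∈ Finset.range N, (D' ^ m).comp ((K m).comp (D ^ (N - m - 1))) = f - g)
    (k : ℕ) :
    ∀ x ∈ LinearMap.ker (D ^ k), f x - g x ∈ LinearMap.range (D' ^ (N - k)) := by
  intro x hx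
  rw [← LinearMap.sub_apply, ← hK, LinearMap.sum_apply]
  exact Submodule.sum_mem _ fun m _ => pow_apply_pow_apply_mem_range_of_mem_ker_pow (K m) hx m

/-- Homotopic morphisms of `N`-complexes induce equal maps on every amplitude homology:
if `∑_{m=0}^{N-1} (∂')^m K_m ∂^{N-m-1} = f - g`, then for each amplitude `1 ≤ k ≤ N-1`
and each `m`-amplitude cycle `x` (i.e. `∂^k x = 0`), the difference `f x - g x` is an
`(N-k)`-amplitude boundary, so `f` and `g` induce the same map
`ker(∂^k)/im(∂^{N-k}) → ker(∂'^k)/im(∂'^{N-k})`. -/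
theorem homotopic_induce_equal_on_amplitude_homology
    (R : Type*) [CommRing R] (M M' : Type*)
    [AddCommGroup M] [Module R M] [AddCommGroup M'] [Module R M']
    (N : ℕ) (hN : 2 ≤ N)
    (D : M →ₗ[R] M) (D' : M' →ₗ[R] M') (hD : D ^ N = 0) (hD' : D' ^ N = 0)
    (f g : M →ₗ[R] M') (hf : f.comp D = D'.comp f) (hg : g.comp D = D'.comp g)
    (K : ℕ → (M →ₗ[R] M'))
    (hK : ∑ m ∈ Finset.range N, (D' ^ m).comp ((K m).comp (D ^ (N - m - 1))) = f - g)
    (k : ℕ) (hk1 : 1 ≤ k) (hk2 : k ≤ N - 1) :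
    ∀ x ∈ LinearMap.ker (D ^ k), f x - g x ∈ LinearMap.range (D' ^ (N - k)) :=
  homotopic_induce_equal_on_amplitude_homology_general R M M' N D D' f g K hK k
end
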